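/- Let G be a simple graph on a nonempty finite vertex set V with at least one edge, and suppose G is not regular, i.e., there exist vertices u, w with deg(u) ≠ deg(w). Then (Σ_{v ∈ V} deg(v)²) / (Σ_{v ∈ V} deg(v)) > (Σ_{v ∈ V} deg(v)) / |V|. That is, the friendship paradox is strict whenever not all people have the same number of friends. -/

import Mathlib

/-! The degree-biased mean exceeds the plain mean by exactly variance/mean, so the friendship
paradox is strict Cauchy–Schwarz for the degree sequence. Strictness comes from the identity
`∑ᵢ (n dᵢ - ∑ d)² = n (n ∑ d² - (∑ d)²)`, whose left side is positive as soon as the degrees are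
not all equal. -/

open Finset

namespace Finset

variable {ι α : Type*} {s : Finset ι} {f : ι → α}

theorem sum_card_mul_sub_sum_sq [CommRing α] :
    ∑ i ∈ s, (#s * f i - ∑ j ∈ s, f j) ^ 2 = #s * (#s * ∑ i ∈ s, f i ^ 2 - (∑ i ∈ s, f i) ^ 2) := by
  simp only [sub_sq, sum_add_distrib, sum_sub_distrib, mul_pow, ← mul_sum, ← sum_mul,
    sum_const, nsmul_eq_mul]
  ring

variable [Field α] [LinearOrder α] [IsStrictOrderedRing α]

theorem sq_sum_lt_card_mul_sum_sq {i j : ι} (hi : i ∈ s) (hj : j ∈ s) (hij : f i ≠ f j) :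
    (∑ i ∈ s, f i) ^ 2 < #s * ∑ i ∈ s, f i ^ 2 := by
  have hcard : (0 : α) < #s := by exact_mod_cast card_pos.2 ⟨i, hi⟩
  have hdev : ∃ k ∈ s, #s * f k - ∑ j ∈ s, f j ≠ 0 := by
    by_contra! h
    exact hij <| mul_left_cancel₀ hcard.ne' <| sub_left_inj.1 <| (h i hi).trans (h j hj).symm
  obtain ⟨k, hk, hk0⟩ := hdev
  have hpos : 0 < ∑ i ∈ s, (#s * f i - ∑ j ∈ s, f j) ^ 2 :=
    sum_pos' (fun _ _ => sq_nonneg _) ⟨k, hk, sq_pos_of_ne_zero hk0⟩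
  rw [sum_card_mul_sub_sum_sq] at hpos
  exact sub_pos.1 (pos_of_mul_pos_right hpos hcard.le)

theorem sum_div_card_lt_sum_sq_div_sum (hf : ∀ i ∈ s, 0 ≤ f i) {i j : ι} (hi : i ∈ s) (hj : j ∈ s)
    (hij : f i ≠ f j) : (∑ i ∈ s, f i) / #s < (∑ i ∈ s, f i ^ 2) / ∑ i ∈ s, f i := by
  have hcard : (0 : α) < #s := by exact_mod_cast card_pos.2 ⟨i, hi⟩
  have hsum : 0 < ∑ i ∈ s, f i := by
    obtain hfi | hfj := hij.lt_or_gt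
    · exact sum_pos' hf ⟨j, hj, (hf i hi).trans_lt hfi⟩
    · exact sum_pos' hf ⟨i, hi, (hf j hj).trans_lt hfj⟩
  rw [div_lt_div_iff₀ hcard hsum, ← sq, mul_comm]
  exact sq_sum_lt_card_mul_sum_sq hi hj hij

end Finset

theorem friendship_paradox_strict_general {V : Type*} [Fintype V]
    (G : SimpleGraph V) [DecidableRel G.Adj]
    (hirr : ∃ u w : V, G.degree u ≠ G.degree w) :
    (∑ v, (G.degree v : ℝ) ^ 2) / (∑ v, (G.degree v : ℝ)) >
      (∑ v, (G.degree v : ℝ)) / (Fintype.card V) := by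
  obtain ⟨u, w, huw⟩ := hirr
  exact sum_div_card_lt_sum_sq_div_sum (fun v _ => Nat.cast_nonneg _) (mem_univ u) (mem_univ w)
    (Nat.cast_injective.ne huw)

/-- The strict friendship paradox: in a finite simple graph with at least one
edge that is not regular (two vertices have different degrees), the
degree-biased mean degree strictly exceeds the mean degree. -/
theorem friendship_paradox_strict {V : Type*} [Fintype V] [Nonempty V]
    (G : SimpleGraph V) [DecidableRel G.Adj]
    (hE : 0 < ∑ v, G.degree v)
    (hirr : ∃ u w : V, G.degree u ≠ G.degree w) :
    (∑ v, (G.degree v : ℝ) ^ 2) / (∑ v, (G.degree v : ℝ)) >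
      (∑ v, (G.degree v : ℝ)) / (Fintype.card V) :=
  friendship_paradox_strict_general G hirr
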